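/- arXiv:0906.4509 — 2 statements merged into one kernel-verified Lean document; each statement's English description precedes it below -/
import Mathlib

section
/- Let W₁, W₂ ∈ 𝒜, i.e., W₁, W₂ are (e+1)-dimensional subspaces of V not contained in H, and let f(Wᵢ) = [σ(Wᵢ∩H) ∪ (Wᵢ∖H)]. Then |f(W₁) ∩ f(W₂)| = (q^{dim(W₁∩W₂)} − 1)/(q − 1). -/
/-- The set of projective points (1-dimensional subspaces) contained in a subset `S` of `V`. -/
def projPts (K : Type*) {V : Type*} [Field K] [AddCommGroup V] [Module K V]
    (S : Set V) : Set (Submodule K V) :=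
  {P | Module.finrank K P = 1 ∧ (P : Set V) ⊆ S}

/-- `𝒜`: the (e+1)-dimensional subspaces of `V` not contained in `H`. -/
def setA {K V : Type*} [Field K] [AddCommGroup V] [Module K V]
    (e : ℕ) (H : Submodule K V) : Set (Submodule K V) :=
  {W | Module.finrank K W = e + 1 ∧ ¬ W ≤ H}

/-- `ℬ`: the (e-1)-dimensional subspaces of `H`. -/
def setB {K V : Type*} [Field K] [AddCommGroup V] [Module K V]
    (e : ℕ) (H : Submodule K V) : Set (Submodule K V) :=
  {W | Module.finrank K W = e - 1 ∧ W ≤ H}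

/-- The block `[σ(W ∩ H) ∪ (W \ H)]` associated to `W ∈ 𝒜`. -/
def blockA {K V : Type*} [Field K] [AddCommGroup V] [Module K V]
    (σ : Submodule K V → Submodule K V) (H W : Submodule K V) : Set (Submodule K V) :=
  projPts K ((σ (W ⊓ H) : Set V) ∪ ((W : Set V) \ (H : Set V)))

/-- The block `[σ(W)]` associated to `W ∈ ℬ`. -/
def blockB {K V : Type*} [Field K] [AddCommGroup V] [Module K V]
    (σ : Submodule K V → Submodule K V) (W : Submodule K V) : Set (Submodule K V) :=
  projPts K (σ W : Set V)

/-- The block set `𝒜' ∪ ℬ'` of the Jungnickel–Tonchev design. -/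
def blocksJT {K V : Type*} [Field K] [AddCommGroup V] [Module K V]
    (e : ℕ) (σ : Submodule K V → Submodule K V) (H : Submodule K V) :
    Set (Set (Submodule K V)) :=
  (blockA σ H '' setA e H) ∪
    {B | ∃ W : Submodule K V, Module.finrank K W = e + 1 ∧ W ≤ H ∧ B = projPts K (W : Set V)}

/-!
Write `Uᵢ = Wᵢ ∩ H` and `D = W₁ ∩ W₂`. Since `σ(Uᵢ) ⊆ H`, a point of `f(W₁) ∩ f(W₂)` either
lies in `σ(U₁) ∩ σ(U₂) = σ(U₁ + U₂)` or is a point of `D` outside `H`. Each `Uᵢ` is a hyperplane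
of `Wᵢ`, so `dim (U₁ + U₂) = 2e - dim (U₁ ∩ U₂) = 2e - dim (D ∩ H)`, whence `σ(U₁ + U₂)` has the
same dimension as `D ∩ H`. Its points therefore exactly replace the points of `D` lying in `H`,
and the count is the number of points of `D`.
-/

open Module

lemma Set.union_sdiff_inter_union_sdiff {α : Type*} {a b s t h : Set α} (ha : a ⊆ h)
    (hb : b ⊆ h) : (a ∪ s \ h) ∩ (b ∪ t \ h) = a ∩ b ∪ (s ∩ t) \ h := by
  ext x
  have := @ha x
  have := @hb x
  simp only [Set.mem_inter_iff, Set.mem_union, Set.mem_sdiff]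
  tauto

lemma Set.ncard_union_sdiff_eq_of_ncard_eq {α : Type*} {c d h : Set α} (hc : c.Finite)
    (hd : d.Finite) (hch : c ⊆ h) (hcard : c.ncard = (d ∩ h).ncard) :
    (c ∪ d \ h).ncard = d.ncard := by
  rw [Set.ncard_union_eq (Set.disjoint_sdiff_right.mono_left hch) hc hd.sdiff, hcard,
    Set.ncard_inter_add_ncard_sdiff_eq_ncard d h hd]

section

variable {K V : Type*} [Field K] [AddCommGroup V] [Module K V]

lemma Submodule.eq_zero_of_mem_of_finrank_eq_one {P H : Submodule K V} (hP : finrank K P = 1)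
    (hPH : ¬P ≤ H) {x : V} (hxP : x ∈ P) (hxH : x ∈ H) : x = 0 :=
  Submodule.disjoint_def.1 ((Submodule.isAtom_iff_finrank_eq_one.2 hP).not_le_iff_disjoint.1 hPH)
    x hxP hxH

lemma Submodule.finrank_inf_add_one_of_not_le [FiniteDimensional K V] {H W : Submodule K V}
    (hH : finrank K H + 1 = finrank K V) (hW : ¬W ≤ H) :
    finrank K ↥(W ⊓ H) + 1 = finrank K W := by
  have hsup : H ⊔ W = ⊤ := by
    apply Submodule.eq_top_of_finrank_eq
    have := Submodule.finrank_lt_finrank_of_lt (left_lt_sup.2 hW)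
    have := Submodule.finrank_le (H ⊔ W)
    omega
  have := Submodule.finrank_sup_add_finrank_inf_eq H W
  rw [hsup, finrank_top, inf_comm] at this
  omega

lemma projPts_inf (A B : Submodule K V) :
    projPts K ((A ⊓ B : Submodule K V) : Set V) =
      projPts K (A : Set V) ∩ projPts K (B : Set V) := by
  ext P
  simp only [projPts, Set.mem_ofPred_eq, Set.mem_inter_iff, Submodule.coe_inf,
    Set.subset_inter_iff]
  tauto

lemma projPts_mono {S T : Set V} (h : S ⊆ T) : projPts K S ⊆ projPts K T :=
  fun _ hP => ⟨hP.1, hP.2.trans h⟩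

lemma projPts_union_sdiff {A W H : Submodule K V} (hAH : A ≤ H) :
    projPts K ((A : Set V) ∪ (W : Set V) \ (H : Set V)) =
      projPts K (A : Set V) ∪ (projPts K (W : Set V) \ projPts K (H : Set V)) := by
  ext P
  simp only [projPts, Set.mem_ofPred_eq, Set.mem_union, Set.mem_sdiff, not_and]
  constructor
  · rintro ⟨hP, hsub⟩
    by_cases hPH : P ≤ H
    · refine Or.inl ⟨hP, fun x hx => (hsub hx).resolve_right fun hxWH => hxWH.2 (hPH hx)⟩
    · refine Or.inr ⟨⟨hP, fun x hx => (hsub hx).elim (fun hxA => ?_) And.left⟩, fun _ => hPH⟩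
      rw [Submodule.eq_zero_of_mem_of_finrank_eq_one hP hPH hx (hAH hxA)]
      exact W.zero_mem
  · rintro (⟨hP, hPA⟩ | ⟨⟨hP, hPW⟩, hPH⟩)
    · exact ⟨hP, hPA.trans Set.subset_union_left⟩
    · refine ⟨hP, fun x hx => ?_⟩
      by_cases hxH : x ∈ H
      · rw [Submodule.eq_zero_of_mem_of_finrank_eq_one hP (hPH hP) hx hxH]
        exact Or.inl A.zero_mem
      · exact Or.inr ⟨hPW hx, hxH⟩

lemma ncard_projPts [Finite K] [FiniteDimensional K V] (M : Submodule K V) :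
    (projPts K (M : Set V)).ncard = (Nat.card K ^ finrank K M - 1) / (Nat.card K - 1) := by
  have himage : projPts K (M : Set V) =
      Submodule.map M.subtype '' {Q : Submodule K M | finrank K Q = 1} := by
    ext P
    constructor
    · rintro ⟨hP, hPM⟩
      have hmap : (P.comap M.subtype).map M.subtype = P := by
        rw [Submodule.map_comap_subtype, inf_eq_right.2 (SetLike.coe_subset_coe.1 hPM)]
      refine ⟨P.comap M.subtype, ?_, hmap⟩
      rwa [Set.mem_ofPred_eq, ← Submodule.finrank_map_subtype_eq, hmap]
    · rintro ⟨Q, hQ, rfl⟩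
      exact ⟨(Submodule.finrank_map_subtype_eq M Q).trans hQ, Submodule.map_subtype_le M Q⟩
  rw [himage,
    Set.ncard_image_of_injective _ (Submodule.map_injective_of_injective M.injective_subtype),
    ← Nat.card_coe_set_eq, ← Module.natCard_eq_pow_finrank, ← Projectivization.card'']
  exact (Nat.card_congr (Projectivization.equivSubmodule K M)).symm

end

theorem stmt4_general (q e : ℕ)
    (K V : Type*) [Field K] [Fintype K] (hK : Fintype.card K = q)
    [AddCommGroup V] [Module K V] [FiniteDimensional K V]
    (hV : Module.finrank K V = 2 * e + 1)
    (H : Submodule K V) (hH : Module.finrank K ↥H = 2 * e)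
    (σ : Submodule K V → Submodule K V)
    (hσle : ∀ W ≤ H, σ W ≤ H)
    (hσinf : ∀ W₁ W₂ : Submodule K V, W₁ ≤ H → W₂ ≤ H → σ W₁ ⊓ σ W₂ = σ (W₁ ⊔ W₂))
    (hσrank : ∀ W ≤ H, Module.finrank K ↥(σ W) = 2 * e - Module.finrank K ↥W)
    (W₁ W₂ : Submodule K V) (hW₁ : W₁ ∈ setA e H) (hW₂ : W₂ ∈ setA e H) :
    (blockA σ H W₁ ∩ blockA σ H W₂).ncard =
      (q ^ Module.finrank K ↥(W₁ ⊓ W₂) - 1) / (q - 1) := by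
  obtain ⟨hr₁, hn₁⟩ := hW₁
  obtain ⟨hr₂, hn₂⟩ := hW₂
  have hU₁ := Submodule.finrank_inf_add_one_of_not_le (by omega) hn₁
  have hU₂ := Submodule.finrank_inf_add_one_of_not_le (by omega) hn₂
  have hUle : W₁ ⊓ H ⊔ W₂ ⊓ H ≤ H := sup_le inf_le_right inf_le_right
  have hdim : finrank K ↥(σ (W₁ ⊓ H ⊔ W₂ ⊓ H)) = finrank K ↥(W₁ ⊓ W₂ ⊓ H) := by
    have := Submodule.finrank_sup_add_finrank_inf_eq (W₁ ⊓ H) (W₂ ⊓ H)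
    rw [inf_inf_inf_comm, inf_idem] at this
    rw [hσrank _ hUle]
    omega
  have hblocks : blockA σ H W₁ ∩ blockA σ H W₂ =
      projPts K (σ (W₁ ⊓ H ⊔ W₂ ⊓ H) : Set V) ∪
        projPts K ((W₁ ⊓ W₂ : Submodule K V) : Set V) \ projPts K (H : Set V) := by
    rw [blockA, blockA, projPts_union_sdiff (hσle _ inf_le_right),
      projPts_union_sdiff (hσle _ inf_le_right),
      Set.union_sdiff_inter_union_sdiff (projPts_mono (hσle _ inf_le_right))
        (projPts_mono (hσle _ inf_le_right)),
      ← projPts_inf, ← projPts_inf, hσinf _ _ inf_le_right inf_le_right]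
  have : Finite V := Module.finite_of_finite K
  rw [hblocks, Set.ncard_union_sdiff_eq_of_ncard_eq (Set.toFinite _) (Set.toFinite _)
    (projPts_mono (hσle _ hUle)), ncard_projPts, Nat.card_eq_fintype_card, hK]
  rw [← projPts_inf, ncard_projPts, ncard_projPts, hdim]

/-- For `W₁, W₂ ∈ 𝒜`, the blocks `f(Wᵢ) = [σ(Wᵢ ∩ H) ∪ (Wᵢ \ H)]` satisfy
`|f(W₁) ∩ f(W₂)| = (q^{dim (W₁ ∩ W₂)} - 1)/(q - 1)`. -/
theorem stmt4 (q e : ℕ) (hq : ∃ p n : ℕ, p.Prime ∧ 0 < n ∧ q = p ^ n) (he : 1 ≤ e)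
    (K V : Type*) [Field K] [Fintype K] (hK : Fintype.card K = q)
    [AddCommGroup V] [Module K V] [FiniteDimensional K V]
    (hV : Module.finrank K V = 2 * e + 1)
    (H : Submodule K V) (hH : Module.finrank K ↥H = 2 * e)
    (σ : Submodule K V → Submodule K V)
    (hσle : ∀ W ≤ H, σ W ≤ H)
    (hσinv : ∀ W ≤ H, σ (σ W) = W)
    (hσanti : ∀ W₁ W₂ : Submodule K V, W₁ ≤ H → W₂ ≤ H → W₁ ≤ W₂ → σ W₂ ≤ σ W₁)
    (hσinf : ∀ W₁ W₂ : Submodule K V, W₁ ≤ H → W₂ ≤ H → σ W₁ ⊓ σ W₂ = σ (W₁ ⊔ W₂))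
    (hσrank : ∀ W ≤ H, Module.finrank K ↥(σ W) = 2 * e - Module.finrank K ↥W)
    (W₁ W₂ : Submodule K V) (hW₁ : W₁ ∈ setA e H) (hW₂ : W₂ ∈ setA e H) :
    (blockA σ H W₁ ∩ blockA σ H W₂).ncard =
      (q ^ Module.finrank K ↥(W₁ ⊓ W₂) - 1) / (q - 1) :=
  stmt4_general q e K V hK hV H hH σ hσle hσinf hσrank W₁ W₂ hW₁ hW₂
end

section
/- Let φ ∈ ΓL(V)_H and let φ' be the permutation of [V] defined by φ'(⟨x⟩) = σφσ(⟨x⟩) if ⟨x⟩ ∈ [H] and φ'(⟨x⟩) = φ(⟨x⟩) otherwise. Then for every (e+1)-dimensional subspace W of H, φ'([W]) = [σφσ(W)]; in particular φ' maps blocks in ℬ' to blocks in ℬ'. -/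
/-- The image of a subspace `W` of `V` under a semilinear bijection `φ` of `V`
(an element of the general semilinear group `ΓL(V)`). -/
def semimap {K V : Type*} [Field K] [AddCommGroup V] [Module K V]
    (τ : K ≃+* K) (φ : V ≃+ V)
    (hφ : ∀ (c : K) (x : V), φ (c • x) = τ c • φ x) (W : Submodule K V) :
    Submodule K V where
  carrier := φ '' (W : Set V)
  add_mem' := by
    rintro _ _ ⟨a, ha, rfl⟩ ⟨b, hb, rfl⟩
    exact ⟨a + b, W.add_mem ha hb, map_add φ a b⟩
  zero_mem' := ⟨0, W.zero_mem, map_zero φ⟩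
  smul_mem' := by
    rintro c _ ⟨a, ha, rfl⟩
    exact ⟨τ.symm c • a, W.smul_mem _ ha, by rw [hφ, RingEquiv.apply_symm_apply]⟩

open Classical in
/-- The permutation `φ'` of the projective points of `V` induced by `φ ∈ ΓL(V)_H`:
on points of `H` it acts as `σ φ σ`, elsewhere as `φ`. -/
noncomputable def phiMap {K V : Type*} [Field K] [AddCommGroup V] [Module K V]
    (σ : Submodule K V → Submodule K V) (H : Submodule K V)
    (τ : K ≃+* K) (φ : V ≃+ V)
    (hφ : ∀ (c : K) (x : V), φ (c • x) = τ c • φ x) (P : Submodule K V) : Submodule K V :=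
  if P ≤ H then σ (semimap τ φ hφ (σ P)) else semimap τ φ hφ P

/-! On the points of `H`, `φ'` is `ψ = σ φ σ`. Restricted to the subspaces of `H`, `ψ` is an
inclusion-preserving bijection with inverse `σ φ⁻¹ σ`, and it preserves dimension because `σ`
takes complementary dimensions twice while `φ` preserves them. Hence the points below `W` are
carried exactly onto the points below `ψ W`, and `ψ W` is again an `(e+1)`-subspace of `H`. -/

section Semimap

variable {K V : Type*} [Field K] [AddCommGroup V] [Module K V] (τ : K ≃+* K) (φ : V ≃+ V)

lemma AddEquiv.symm_map_smul_of_semilinear (hφ : ∀ (c : K) (x : V), φ (c • x) = τ c • φ x) :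
    ∀ (c : K) (x : V), φ.symm (c • x) = τ.symm c • φ.symm x := fun c x =>
  φ.injective (by rw [hφ, RingEquiv.apply_symm_apply, φ.apply_symm_apply, φ.apply_symm_apply])

variable (hφ : ∀ (c : K) (x : V), φ (c • x) = τ c • φ x)

local notation "semimapSymm" =>
  semimap τ.symm φ.symm (AddEquiv.symm_map_smul_of_semilinear τ φ hφ)

lemma coe_semimap (W : Submodule K V) : (semimap τ φ hφ W : Set V) = φ '' W := rfl

lemma semimap_mono {W₁ W₂ : Submodule K V} (h : W₁ ≤ W₂) :
    semimap τ φ hφ W₁ ≤ semimap τ φ hφ W₂ :=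
  Set.image_mono h

lemma semimapSymm_semimap (W : Submodule K V) : semimapSymm (semimap τ φ hφ W) = W :=
  SetLike.coe_injective (by simp [coe_semimap, Set.image_image])

lemma semimap_semimapSymm (W : Submodule K V) : semimap τ φ hφ (semimapSymm W) = W :=
  SetLike.coe_injective (by simp [coe_semimap, Set.image_image])

lemma finrank_semimap (W : Submodule K V) :
    Module.finrank K (semimap τ φ hφ W) = Module.finrank K W := by
  let j : W ≃+ semimap τ φ hφ W := φ.addSubgroupMap W.toAddSubgroup
  exact congr_arg Cardinal.toNat
    (rank_eq_of_equiv_equiv τ j τ.bijective fun c x => Subtype.ext (hφ c x)).symm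

end Semimap

structure IsPolarityOn {K V : Type*} [Field K] [AddCommGroup V] [Module K V] (n : ℕ)
    (H : Submodule K V) (σ : Submodule K V → Submodule K V) : Prop where
  le : ∀ W ≤ H, σ W ≤ H
  involutive : ∀ W ≤ H, σ (σ W) = W
  antitone : ∀ W₁ W₂ : Submodule K V, W₁ ≤ H → W₂ ≤ H → W₁ ≤ W₂ → σ W₂ ≤ σ W₁
  finrank_eq : ∀ W ≤ H, Module.finrank K (σ W) = n - Module.finrank K W

def polarConj {K V : Type*} [Field K] [AddCommGroup V] [Module K V]
    (σ : Submodule K V → Submodule K V) (τ : K ≃+* K) (φ : V ≃+ V)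
    (hφ : ∀ (c : K) (x : V), φ (c • x) = τ c • φ x) (W : Submodule K V) : Submodule K V :=
  σ (semimap τ φ hφ (σ W))

section PolarConj

variable {K V : Type*} [Field K] [AddCommGroup V] [Module K V] {n : ℕ}
  {H : Submodule K V} {σ : Submodule K V → Submodule K V}
  {τ : K ≃+* K} {φ : V ≃+ V} {hφ : ∀ (c : K) (x : V), φ (c • x) = τ c • φ x}

local notation "semimapSymm" =>
  semimap τ.symm φ.symm (AddEquiv.symm_map_smul_of_semilinear τ φ hφ)

local notation "polarConjSymm" =>
  polarConj σ τ.symm φ.symm (AddEquiv.symm_map_smul_of_semilinear τ φ hφ)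

lemma semimap_le_of_le (hφH : semimap τ φ hφ H = H) {W : Submodule K V} (hW : W ≤ H) :
    semimap τ φ hφ W ≤ H :=
  hφH ▸ semimap_mono τ φ hφ hW

lemma semimapSymm_eq_of_semimap_eq (hφH : semimap τ φ hφ H = H) : semimapSymm H = H := by
  conv_lhs => rw [← hφH]
  exact semimapSymm_semimap τ φ hφ H

lemma phiMap_of_le {P : Submodule K V} (hP : P ≤ H) :
    phiMap σ H τ φ hφ P = polarConj σ τ φ hφ P :=
  if_pos hP

namespace IsPolarityOn

lemma polarConj_le (hσ : IsPolarityOn n H σ) (hφH : semimap τ φ hφ H = H)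
    {W : Submodule K V} (hW : W ≤ H) : polarConj σ τ φ hφ W ≤ H :=
  hσ.le _ (semimap_le_of_le hφH (hσ.le W hW))

lemma polarConj_mono (hσ : IsPolarityOn n H σ) (hφH : semimap τ φ hφ H = H)
    {W₁ W₂ : Submodule K V} (h₁ : W₁ ≤ H) (h₂ : W₂ ≤ H) (h : W₁ ≤ W₂) :
    polarConj σ τ φ hφ W₁ ≤ polarConj σ τ φ hφ W₂ :=
  hσ.antitone _ _ (semimap_le_of_le hφH (hσ.le W₂ h₂)) (semimap_le_of_le hφH (hσ.le W₁ h₁))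
    (semimap_mono τ φ hφ (hσ.antitone W₁ W₂ h₁ h₂ h))

lemma finrank_polarConj (hσ : IsPolarityOn n H σ) (hφH : semimap τ φ hφ H = H)
    {W : Submodule K V} (hW : W ≤ H) (hWn : Module.finrank K W ≤ n) :
    Module.finrank K (polarConj σ τ φ hφ W) = Module.finrank K W := by
  rw [polarConj, hσ.finrank_eq _ (semimap_le_of_le hφH (hσ.le W hW)), finrank_semimap,
    hσ.finrank_eq W hW]
  omega

lemma polarConjSymm_polarConj (hσ : IsPolarityOn n H σ) (hφH : semimap τ φ hφ H = H)
    {W : Submodule K V} (hW : W ≤ H) :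
    polarConjSymm (polarConj σ τ φ hφ W) = W := by
  rw [polarConj, polarConj, hσ.involutive _ (semimap_le_of_le hφH (hσ.le W hW)),
    semimapSymm_semimap, hσ.involutive W hW]

lemma polarConj_polarConjSymm (hσ : IsPolarityOn n H σ) (hφH : semimap τ φ hφ H = H)
    {W : Submodule K V} (hW : W ≤ H) :
    polarConj σ τ φ hφ (polarConjSymm W) = W :=
  hσ.polarConjSymm_polarConj (semimapSymm_eq_of_semimap_eq hφH) hW

theorem image_projPts_eq (hσ : IsPolarityOn n H σ) (hn : 1 ≤ n)
    (hφH : semimap τ φ hφ H = H) {W : Submodule K V} (hW : W ≤ H) :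
    phiMap σ H τ φ hφ '' projPts K (W : Set V) = projPts K (polarConj σ τ φ hφ W : Set V) := by
  have hφH' := semimapSymm_eq_of_semimap_eq hφH
  ext Q
  constructor
  · rintro ⟨P, ⟨hP, hPW : P ≤ W⟩, rfl⟩
    have hPH : P ≤ H := hPW.trans hW
    rw [phiMap_of_le hPH]
    exact ⟨(hσ.finrank_polarConj hφH hPH (by omega)).trans hP,
      hσ.polarConj_mono hφH hPH hW hPW⟩
  · rintro ⟨hQ, hQW : Q ≤ polarConj σ τ φ hφ W⟩
    have hQH : Q ≤ H := hQW.trans (hσ.polarConj_le hφH hW)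
    have hPH : polarConjSymm Q ≤ H := hσ.polarConj_le hφH' hQH
    refine ⟨polarConjSymm Q, ⟨?_, ?_⟩, ?_⟩
    · exact (hσ.finrank_polarConj hφH' hQH (by omega)).trans hQ
    · exact (hσ.polarConj_mono hφH' hQH (hσ.polarConj_le hφH hW) hQW).trans_eq
        (hσ.polarConjSymm_polarConj hφH hW)
    · rw [phiMap_of_le hPH, hσ.polarConj_polarConjSymm hφH hQH]

end IsPolarityOn

end PolarConj

theorem stmt8_general (e : ℕ) (he : 1 ≤ e)
    (K V : Type*) [Field K] [AddCommGroup V] [Module K V]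
    (H : Submodule K V) (σ : Submodule K V → Submodule K V)
    (hσle : ∀ W ≤ H, σ W ≤ H)
    (hσinv : ∀ W ≤ H, σ (σ W) = W)
    (hσanti : ∀ W₁ W₂ : Submodule K V, W₁ ≤ H → W₂ ≤ H → W₁ ≤ W₂ → σ W₂ ≤ σ W₁)
    (hσrank : ∀ W ≤ H, Module.finrank K ↥(σ W) = 2 * e - Module.finrank K ↥W)
    (τ : K ≃+* K) (φ : V ≃+ V) (hφ : ∀ (c : K) (x : V), φ (c • x) = τ c • φ x)
    (hφH : semimap τ φ hφ H = H) :
    (∀ W : Submodule K V, Module.finrank K W = e + 1 → W ≤ H →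
      phiMap σ H τ φ hφ '' projPts K (W : Set V) =
        projPts K (σ (semimap τ φ hφ (σ W)) : Set V)) ∧
    (∀ B ∈ {B : Set (Submodule K V) |
        ∃ W : Submodule K V, Module.finrank K W = e + 1 ∧ W ≤ H ∧ B = projPts K (W : Set V)},
      phiMap σ H τ φ hφ '' B ∈ {B : Set (Submodule K V) |
        ∃ W : Submodule K V, Module.finrank K W = e + 1 ∧ W ≤ H ∧ B = projPts K (W : Set V)}) := by
  have hσ : IsPolarityOn (2 * e) H σ := ⟨hσle, hσinv, hσanti, hσrank⟩
  have image_eq : ∀ W ≤ H, phiMap σ H τ φ hφ '' projPts K (W : Set V) =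
      projPts K (polarConj σ τ φ hφ W : Set V) :=
    fun W hW => hσ.image_projPts_eq (by omega) hφH hW
  refine ⟨fun W _ hW => image_eq W hW, ?_⟩
  rintro _ ⟨W, hW, hWH, rfl⟩
  exact ⟨polarConj σ τ φ hφ W, (hσ.finrank_polarConj hφH hWH (by omega)).trans hW,
    hσ.polarConj_le hφH hWH, image_eq W hWH⟩

/-- For `φ ∈ ΓL(V)_H`, the induced permutation `φ'` of the projective
points maps the block `[W]` to `[σφσ(W)]` for every (e+1)-dimensional subspace `W` of `H`;
in particular `φ'` maps blocks in `ℬ'` to blocks in `ℬ'`. -/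
theorem stmt8 (q e : ℕ) (hq : ∃ p n : ℕ, p.Prime ∧ 0 < n ∧ q = p ^ n) (he : 1 ≤ e)
    (K V : Type*) [Field K] [Fintype K] (hK : Fintype.card K = q)
    [AddCommGroup V] [Module K V] [FiniteDimensional K V]
    (hV : Module.finrank K V = 2 * e + 1)
    (H : Submodule K V) (hH : Module.finrank K ↥H = 2 * e)
    (σ : Submodule K V → Submodule K V)
    (hσle : ∀ W ≤ H, σ W ≤ H)
    (hσinv : ∀ W ≤ H, σ (σ W) = W)
    (hσanti : ∀ W₁ W₂ : Submodule K V, W₁ ≤ H → W₂ ≤ H → W₁ ≤ W₂ → σ W₂ ≤ σ W₁)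
    (hσinf : ∀ W₁ W₂ : Submodule K V, W₁ ≤ H → W₂ ≤ H → σ W₁ ⊓ σ W₂ = σ (W₁ ⊔ W₂))
    (hσrank : ∀ W ≤ H, Module.finrank K ↥(σ W) = 2 * e - Module.finrank K ↥W)
    (τ : K ≃+* K) (φ : V ≃+ V) (hφ : ∀ (c : K) (x : V), φ (c • x) = τ c • φ x)
    (hφH : semimap τ φ hφ H = H) :
    (∀ W : Submodule K V, Module.finrank K W = e + 1 → W ≤ H →
      phiMap σ H τ φ hφ '' projPts K (W : Set V) =
        projPts K (σ (semimap τ φ hφ (σ W)) : Set V)) ∧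
    (∀ B ∈ {B : Set (Submodule K V) |
        ∃ W : Submodule K V, Module.finrank K W = e + 1 ∧ W ≤ H ∧ B = projPts K (W : Set V)},
      phiMap σ H τ φ hφ '' B ∈ {B : Set (Submodule K V) |
        ∃ W : Submodule K V, Module.finrank K W = e + 1 ∧ W ≤ H ∧ B = projPts K (W : Set V)}) :=
  stmt8_general e he K V H σ hσle hσinv hσanti hσrank τ φ hφ hφH
end
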